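/- Let N ≥ 2, m = ⌊N/2⌋, and let g_k ∈ ℤ[[x]] (k = 1,…,m) be as in the previous context, each with constant term 1. Suppose f ∈ ℚ[[x]] has bounded denominator, constant term 1, and satisfies f^n = ∏_{k=1}^m g_k^{n·e(k)} for some positive integer n and rationals e(k) with n·e(k) ∈ ℤ. Then e(k) ∈ ℤ for all k with 2k ≠ N, and e(k) ∈ ½ℤ if 2k = N. -/

import Mathlib

open Finset PowerSeries

/-- The formal power series `g_k = (1−x^k)·∏_{n≥1}(1−x^{nN+k})(1−x^{nN−k}) ∈ ℤ[[x]]`.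
Since for `1 ≤ k < N` the factors with `n > j` do not affect the coefficient of `x^j`,
the infinite product is defined coefficient-wise by a finite truncated product. -/
noncomputable def siegelSeries (N k : ℕ) : PowerSeries ℤ :=
  PowerSeries.mk fun j =>
    PowerSeries.coeff (R := ℤ) j
      ((1 - X ^ k) * ∏ n ∈ Icc 1 (j + 1), ((1 - X ^ (n * N + k)) * (1 - X ^ (n * N - k))))

/-- The image of `g_k` in the field of formal Laurent series `ℚ((x))`. -/
noncomputable def siegelSeriesL (N k : ℕ) : LaurentSeries ℚ :=
  HahnSeries.ofPowerSeries ℤ ℚ (PowerSeries.map (Int.castRingHom ℚ) (siegelSeries N k))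

/-- A power series over `ℚ` has *bounded denominator* if some nonzero integer
multiple of it has integer coefficients. -/
def PowerSeries.HasBoundedDenominator (f : PowerSeries ℚ) : Prop :=
  ∃ d : ℤ, d ≠ 0 ∧ ∀ n : ℕ, ∃ z : ℤ, (d : ℚ) * PowerSeries.coeff (R := ℚ) n f = (z : ℚ)

/-!
By Gauss's lemma `f` has integer coefficients, so everything happens among the units of `ℤ⟦X⟧`.
Modulo `X ^ N`, `g_k ≡ (1 - X ^ k)(1 - X ^ (N - k))`, hence `g_k ≡ 1 - c_k X ^ k mod X ^ (k + 1)`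
with `c_k = 2` if `2k = N` and `c_k = 1` otherwise. If `n ∣ E_j` for all `j < k`, then
`u = f ∏_{j < k} g_j ^ (-E_j / n)` is an integral unit with
`u ^ n = ∏_{j ≥ k} g_j ^ E_j ≡ 1 - c_k E_k X ^ k mod X ^ (k + 1)`. Since `u ^ n ≡ 1 mod X ^ k`
forces `u ≡ 1 mod X ^ k`, comparing coefficients of `X ^ k` gives `n u_k = -c_k E_k`, so
`n ∣ c_k E_k`, and induction on `k` concludes.
-/

namespace PowerSeries

variable {R : Type*} [CommRing R]

variable (R) in
/-- The higher unit group `1 + X ^ k R⟦X⟧`. -/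
noncomputable def higherUnits (k : ℕ) : Subgroup R⟦X⟧ˣ :=
  (Units.map (Ideal.Quotient.mk (Ideal.span {(X : R⟦X⟧) ^ k})).toMonoidHom).ker

theorem mem_higherUnits {k : ℕ} {u : R⟦X⟧ˣ} : u ∈ higherUnits R k ↔ X ^ k ∣ (u : R⟦X⟧) - 1 := by
  rw [higherUnits, MonoidHom.mem_ker, Units.ext_iff, Units.coe_map, Units.val_one,
    ← map_one (Ideal.Quotient.mk _)]
  exact Ideal.Quotient.eq.trans Ideal.mem_span_singleton

theorem isUnit_of_X_pow_dvd_sub_one {k : ℕ} (hk : k ≠ 0) {φ : R⟦X⟧} (h : X ^ k ∣ φ - 1) :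
    IsUnit φ := by
  have h0 := X_dvd_iff.1 ((dvd_pow_self X hk).trans h)
  rw [map_sub, map_one, sub_eq_zero] at h0
  exact isUnit_iff_constantCoeff.2 (h0 ▸ isUnit_one)

theorem higherUnits_antitone : Antitone (higherUnits R) := fun _ _ hkl _ hu =>
  mem_higherUnits.2 ((pow_dvd_pow X hkl).trans (mem_higherUnits.1 hu))

theorem coeff_eq_zero_of_mem_higherUnits {k l : ℕ} (hk : k ≠ 0) (hkl : k < l) {u : R⟦X⟧ˣ}
    (hu : u ∈ higherUnits R l) : coeff k (u : R⟦X⟧) = 0 := by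
  simpa [coeff_one, hk] using X_pow_dvd_iff.1 (mem_higherUnits.1 hu) k hkl

theorem coeff_mul_of_X_pow_dvd_sub_one {k : ℕ} (hk : k ≠ 0) {a b : R⟦X⟧}
    (ha : X ^ k ∣ a - 1) (hb : X ^ k ∣ b - 1) :
    coeff k (a * b) = coeff k a + coeff k b := by
  have hab : coeff k ((a - 1) * (b - 1)) = 0 :=
    X_pow_dvd_iff.1 (pow_add (X : R⟦X⟧) k k ▸ mul_dvd_mul ha hb) k (by omega)
  rw [show a * b = (a - 1) * (b - 1) + a + b - 1 by ring]
  simp [hab, coeff_one, hk]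

noncomputable def higherUnitsCoeff {k : ℕ} (hk : k ≠ 0) : higherUnits R k →* Multiplicative R where
  toFun u := .ofAdd (coeff k ((u : R⟦X⟧ˣ) : R⟦X⟧))
  map_one' := by simp [coeff_one, hk]
  map_mul' u v := congrArg Multiplicative.ofAdd <| coeff_mul_of_X_pow_dvd_sub_one hk
    (mem_higherUnits.1 u.2) (mem_higherUnits.1 v.2)

theorem coeff_pow_of_mem_higherUnits {k : ℕ} (hk : k ≠ 0) {u : R⟦X⟧ˣ}
    (hu : u ∈ higherUnits R k) (n : ℕ) :
    coeff k ((u ^ n : R⟦X⟧ˣ) : R⟦X⟧) = n • coeff k (u : R⟦X⟧) :=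
  congrArg Multiplicative.toAdd (map_pow (higherUnitsCoeff (R := R) hk) ⟨u, hu⟩ n)

theorem coeff_zpow_of_mem_higherUnits {k : ℕ} (hk : k ≠ 0) {u : R⟦X⟧ˣ}
    (hu : u ∈ higherUnits R k) (t : ℤ) :
    coeff k ((u ^ t : R⟦X⟧ˣ) : R⟦X⟧) = t • coeff k (u : R⟦X⟧) :=
  congrArg Multiplicative.toAdd (map_zpow (higherUnitsCoeff (R := R) hk) ⟨u, hu⟩ t)

theorem coeff_prod_zpow_of_mem_higherUnits {ι : Type*} {k : ℕ} (hk : k ≠ 0) (s : Finset ι)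
    {g : ι → R⟦X⟧ˣ} (hg : ∀ i ∈ s, g i ∈ higherUnits R k) (t : ι → ℤ) :
    coeff k ((∏ i ∈ s, g i ^ t i : R⟦X⟧ˣ) : R⟦X⟧) = ∑ i ∈ s, t i • coeff k (g i : R⟦X⟧) := by
  induction s using Finset.cons_induction with
  | empty => simp [coeff_one, hk]
  | cons i s hi ih =>
    rw [forall_mem_cons] at hg
    rw [prod_cons, sum_cons, Units.val_mul, coeff_mul_of_X_pow_dvd_sub_one hk
      (mem_higherUnits.1 (zpow_mem hg.1 _))
      (mem_higherUnits.1 (prod_mem fun j hj => zpow_mem (hg.2 j hj) _)),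
      coeff_zpow_of_mem_higherUnits hk hg.1, ih hg.2]

theorem X_pow_succ_dvd_iff {k : ℕ} {φ : R⟦X⟧} :
    X ^ (k + 1) ∣ φ ↔ X ^ k ∣ φ ∧ coeff k φ = 0 := by
  simp only [X_pow_dvd_iff, Nat.lt_succ_iff_lt_or_eq, or_imp, forall_and, forall_eq]

/-- If `u ≡ 1 mod X ^ k` then the coefficient of `X ^ k` in `u ^ n` is `n` times that in `u`,
so torsion-freeness lets the congruence `u ^ n ≡ 1` climb from `X ^ k` to `X ^ (k + 1)`. -/
theorem mem_higherUnits_of_pow_mem [IsAddTorsionFree R] {u : R⟦X⟧ˣ} (hu : u ∈ higherUnits R 1)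
    {n : ℕ} (hn : n ≠ 0) : ∀ {k : ℕ}, u ^ n ∈ higherUnits R k → u ∈ higherUnits R k
  | 0, _ => by simp [mem_higherUnits]
  | 1, _ => hu
  | k + 2, hk => by
    have hk1 := mem_higherUnits_of_pow_mem hu hn (higherUnits_antitone (Nat.le_succ _) hk)
    rw [mem_higherUnits, X_pow_succ_dvd_iff] at hk ⊢
    refine ⟨mem_higherUnits.1 hk1, ?_⟩
    have hcoeff := coeff_pow_of_mem_higherUnits k.succ_ne_zero hk1 n
    rw [map_sub, coeff_one, if_neg k.succ_ne_zero, sub_zero] at hk ⊢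
    exact nsmul_right_injective hn (show n • _ = n • 0 by rw [← hcoeff, hk.2, smul_zero])

theorem X_pow_dvd_mul_sub_one {N : ℕ} {a b : R⟦X⟧} (ha : X ^ N ∣ a - 1) (hb : X ^ N ∣ b - 1) :
    X ^ N ∣ a * b - 1 := by
  rw [show a * b - 1 = (a - 1) * b + (b - 1) by ring]
  exact (dvd_mul_of_dvd_left ha b).add hb

theorem X_pow_dvd_prod_sub_one {ι : Type*} {N : ℕ} (s : Finset ι) {F : ι → R⟦X⟧}
    (hF : ∀ i ∈ s, X ^ N ∣ F i - 1) : X ^ N ∣ ∏ i ∈ s, F i - 1 :=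
  prod_induction F (fun a => X ^ N ∣ a - 1) (fun _ _ => X_pow_dvd_mul_sub_one) (by simp) hF

theorem X_pow_dvd_one_sub_X_pow_sub_one {N a : ℕ} (h : N ≤ a) :
    (X : R⟦X⟧) ^ N ∣ (1 - X ^ a) - 1 := by
  rw [sub_sub_cancel_left]
  exact (pow_dvd_pow X h).neg_right

theorem dvd_coeff_of_dvd_coeff_pow {p : R} (hp : Prime p) {φ : R⟦X⟧} {n : ℕ} (hn : n ≠ 0)
    (h : ∀ j, p ∣ coeff j (φ ^ n)) (j : ℕ) : p ∣ coeff j φ := by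
  have : (Ideal.span {p}).IsPrime := (Ideal.span_singleton_prime hp.ne_zero).2 hp
  have hzero : map (Ideal.Quotient.mk (Ideal.span {p})) φ = 0 := by
    refine (pow_eq_zero_iff hn).1 ?_
    ext j
    simpa [← map_pow, Ideal.Quotient.eq_zero_iff_mem, Ideal.mem_span_singleton] using h j
  simpa [Ideal.Quotient.eq_zero_iff_mem, Ideal.mem_span_singleton] using
    congrArg (coeff j) hzero

/-- Gauss's lemma: if `d • f` and `f ^ n` are integral, then for every prime `p ∣ d` the
reduction of `d • f` modulo `p` is nilpotent, hence zero, so `d` can be replaced by `d / p`. -/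
theorem HasBoundedDenominator.exists_map_eq_of_pow_eq_map {f : ℚ⟦X⟧}
    (hf : f.HasBoundedDenominator) {n : ℕ} (hn : n ≠ 0) {F : ℤ⟦X⟧}
    (hF : f ^ n = map (Int.castRingHom ℚ) F) : ∃ f' : ℤ⟦X⟧, map (Int.castRingHom ℚ) f' = f := by
  obtain ⟨d, hd, hz⟩ := hf
  choose z hz using hz
  have hdf : map (Int.castRingHom ℚ) (mk z) = C (d : ℚ) * f := by
    ext j
    rw [coeff_map, coeff_mk, coeff_C_mul, hz]
    rfl
  clear hz
  induction d using UniqueFactorizationMonoid.induction_on_prime generalizing z with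
  | h₁ => exact absurd rfl hd
  | h₂ d hu =>
    refine ⟨C d * mk z, ?_⟩
    rw [map_mul, hdf, map_C, ← mul_assoc, ← map_mul]
    simp [← Int.cast_mul, Int.isUnit_mul_self hu]
  | h₃ a p ha hp ih =>
    have hpow : mk z ^ n = C ((p * a) ^ n) * F := by
      refine map_injective (Int.castRingHom ℚ) Int.cast_injective ?_
      rw [map_pow, hdf, mul_pow, hF, map_mul, map_C, ← map_pow]
      simp
    have hdvd := dvd_coeff_of_dvd_coeff_pow hp hn fun j => by
      rw [hpow, coeff_C_mul]
      exact (dvd_pow (dvd_mul_right p a) hn).mul_right _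
    choose q hq using hdvd
    simp only [coeff_mk] at hq
    refine ih ha q ?_
    ext j
    have hj := congrArg (coeff j) hdf
    rw [coeff_map, coeff_mk, coeff_C_mul, hq, map_mul, Int.cast_mul, mul_assoc] at hj
    rw [coeff_map, coeff_mk, coeff_C_mul]
    exact mul_left_cancel₀ (Int.cast_ne_zero.2 hp.ne_zero) hj

theorem dvd_mul_coeff_of_pow_eq_prod_zpow {n : ℕ} (hn : n ≠ 0) {f : ℤ⟦X⟧ˣ}
    (hf : f ∈ higherUnits ℤ 1) {s : Finset ℕ} (hs : 0 ∉ s) {g : ℕ → ℤ⟦X⟧ˣ}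
    (hg : ∀ j ∈ s, g j ∈ higherUnits ℤ j) {E : ℕ → ℤ} (h : f ^ n = ∏ j ∈ s, g j ^ E j)
    {k : ℕ} (hk : k ∈ s) (hE : ∀ j ∈ s, j < k → (n : ℤ) ∣ E j) :
    (n : ℤ) ∣ E k * coeff k (g k : ℤ⟦X⟧) := by
  classical
  have hpos : ∀ j ∈ s, 0 < j := fun j hj => Nat.pos_of_ne_zero (ne_of_mem_of_not_mem hj hs)
  choose! w hw using hE
  set u := f * ∏ j ∈ s with j < k, g j ^ (-w j)
  have hu : u ∈ higherUnits ℤ 1 := mul_mem hf <| prod_mem fun j hj =>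
    zpow_mem (higherUnits_antitone (hpos j (mem_filter.1 hj).1) (hg j (mem_filter.1 hj).1)) _
  have hun : u ^ n = ∏ j ∈ s with ¬j < k, g j ^ E j := by
    have hlow : ∏ j ∈ s with j < k, (g j ^ (-w j)) ^ n = (∏ j ∈ s with j < k, g j ^ E j)⁻¹ := by
      rw [← prod_inv_distrib]
      refine prod_congr rfl fun j hj => ?_
      rw [mem_filter] at hj
      rw [hw j hj.1 hj.2, ← zpow_natCast, ← zpow_mul, ← zpow_neg]
      ring_nf
    rw [mul_pow, h, ← prod_pow, hlow, ← prod_filter_mul_prod_filter_not s (· < k),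
      mul_inv_cancel_comm]
  have hhigh : ∀ j ∈ {j ∈ s | ¬j < k}, g j ∈ higherUnits ℤ k := fun j hj =>
    higherUnits_antitone (not_lt.1 (mem_filter.1 hj).2) (hg j (mem_filter.1 hj).1)
  have hk0 : k ≠ 0 := (hpos k hk).ne'
  refine ⟨coeff k (u : ℤ⟦X⟧), ?_⟩
  rw [← nsmul_eq_mul, ← coeff_pow_of_mem_higherUnits hk0
    (mem_higherUnits_of_pow_mem hu hn (hun ▸ prod_mem fun j hj => zpow_mem (hhigh j hj) _)),
    hun, coeff_prod_zpow_of_mem_higherUnits hk0 _ hhigh, sum_eq_single_of_mem k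
    (mem_filter.2 ⟨hk, lt_irrefl k⟩), smul_eq_mul]
  intro j hj hjk
  rw [mem_filter, not_lt] at hj
  rw [coeff_eq_zero_of_mem_higherUnits hk0 (lt_of_le_of_ne hj.2 (Ne.symm hjk)) (hg j hj.1),
    smul_zero]

end PowerSeries

theorem RingHom.map_val_prod_zpow {A K ι : Type*} [CommRing A] [Field K] (φ : A →+* K)
    (s : Finset ι) (u : ι → Aˣ) (t : ι → ℤ) :
    φ ((∏ i ∈ s, u i ^ t i : Aˣ) : A) = ∏ i ∈ s, φ (u i : A) ^ t i := by
  change ((Units.map (φ : A →* K) (∏ i ∈ s, u i ^ t i) : Kˣ) : K) = _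
  simp [map_prod, Units.coe_prod, map_zpow, Units.val_zpow_eq_zpow_val]

/-- Every factor of the product except `1 - X ^ k` and `1 - X ^ (N - k)` is `≡ 1 mod X ^ N`. -/
theorem X_pow_dvd_siegelSeries_sub {N k : ℕ} (hk : 0 < k) (hkN : k < N) :
    X ^ N ∣ siegelSeries N k - (1 - X ^ k) * (1 - X ^ (N - k)) := by
  rw [X_pow_dvd_iff]
  intro j hj
  have h1 : 1 ∈ Icc 1 (j + 1) := by simp
  set T := ∏ n ∈ (Icc 1 (j + 1)).erase 1, ((1 - X ^ (n * N + k)) * (1 - X ^ (n * N - k)) : ℤ⟦X⟧)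
  have hT : X ^ N ∣ (1 - X ^ (N + k)) * T - 1 := by
    refine X_pow_dvd_mul_sub_one (X_pow_dvd_one_sub_X_pow_sub_one (by omega))
      (X_pow_dvd_prod_sub_one _ fun n hn => ?_)
    have h2N : 2 * N ≤ n * N := Nat.mul_le_mul_right N (by simp at hn; omega)
    exact X_pow_dvd_mul_sub_one (X_pow_dvd_one_sub_X_pow_sub_one (by omega))
      (X_pow_dvd_one_sub_X_pow_sub_one (by omega))
  rw [siegelSeries, map_sub, coeff_mk, ← mul_prod_erase _ _ h1, one_mul, ← map_sub,
    show (1 - X ^ k) * ((1 - X ^ (N + k)) * (1 - X ^ (N - k)) * T) -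
        (1 - X ^ k) * (1 - X ^ (N - k)) =
      (1 - X ^ k) * (1 - X ^ (N - k)) * ((1 - X ^ (N + k)) * T - 1) by ring]
  exact X_pow_dvd_iff.1 (dvd_mul_of_dvd_right hT _) j hj

theorem X_pow_dvd_siegelSeries_sub_one {N k : ℕ} (hk : 0 < k) (hkN : 2 * k ≤ N) :
    X ^ k ∣ siegelSeries N k - 1 := by
  rw [show siegelSeries N k - 1 = (siegelSeries N k - (1 - X ^ k) * (1 - X ^ (N - k))) +
    (-(X ^ k * (1 - X ^ (N - k))) - X ^ (N - k)) by ring]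
  exact ((pow_dvd_pow X (by omega)).trans (X_pow_dvd_siegelSeries_sub hk (by omega))).add
    ((dvd_mul_right _ _).neg_right.sub (pow_dvd_pow X (by omega)))

theorem coeff_siegelSeries_self {N k : ℕ} (hk : 0 < k) (hkN : 2 * k ≤ N) :
    coeff k (siegelSeries N k) = if 2 * k = N then -2 else -1 := by
  have hP : ((1 - X ^ k) * (1 - X ^ (N - k)) : ℤ⟦X⟧) = 1 - X ^ k - X ^ (N - k) + X ^ N := by
    rw [← Nat.add_sub_cancel' (show k ≤ N by omega), pow_add, Nat.add_sub_cancel_left]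
    ring
  have h := X_pow_dvd_iff.1 (X_pow_dvd_siegelSeries_sub (N := N) hk (by omega)) k (by omega)
  rw [map_sub, sub_eq_zero, hP] at h
  simp only [h, map_add, map_sub, coeff_one, coeff_X_pow]
  split_ifs <;> omega

theorem dvd_mul_coeff_siegelSeries {N m n : ℕ} (hm : 2 * m ≤ N) (hn : n ≠ 0) {f : ℤ⟦X⟧ˣ}
    (hf : f ∈ higherUnits ℤ 1) {g : ℕ → ℤ⟦X⟧ˣ}
    (hg : ∀ k ∈ Icc 1 m, (g k : ℤ⟦X⟧) = siegelSeries N k) {E : ℕ → ℤ}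
    (h : f ^ n = ∏ k ∈ Icc 1 m, g k ^ E k) {k : ℕ} (hk : k ∈ Icc 1 m) :
    (n : ℤ) ∣ E k * coeff k (siegelSeries N k) := by
  induction k using Nat.strong_induction_on with
  | _ k ih =>
    rw [← hg k hk]
    refine dvd_mul_coeff_of_pow_eq_prod_zpow hn hf (by simp) (fun j hj => ?_) h hk
      fun j hj hjk => ?_
    · rw [mem_higherUnits, hg j hj]
      exact X_pow_dvd_siegelSeries_sub_one (mem_Icc.1 hj).1 (by grind)
    · have hjN : 2 * j < N := by grind
      simpa [coeff_siegelSeries_self (mem_Icc.1 hj).1 hjN.le, hjN.ne] using ih j hjk hj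

theorem siegelSeries_exponents_integral_general (N : ℕ) (m : ℕ) (hm : m = N / 2)
    (f : PowerSeries ℚ) (hfbd : f.HasBoundedDenominator)
    (hf1 : PowerSeries.constantCoeff (R := ℚ) f = 1)
    (n : ℕ) (hn : 0 < n) (e : ℕ → ℚ) (E : ℕ → ℤ)
    (hE : ∀ k ∈ Icc 1 m, (E k : ℚ) = (n : ℚ) * e k)
    (h : (HahnSeries.ofPowerSeries ℤ ℚ f : LaurentSeries ℚ) ^ n =
      ∏ k ∈ Icc 1 m, siegelSeriesL N k ^ E k) :
    ∀ k ∈ Icc 1 m,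
      (2 * k ≠ N → ∃ z : ℤ, e k = (z : ℚ)) ∧
      (2 * k = N → ∃ z : ℤ, e k = (z : ℚ) / 2) := by
  have hunit : ∀ k ∈ Icc 1 m, ∃ u : ℤ⟦X⟧ˣ, (u : ℤ⟦X⟧) = siegelSeries N k := fun k hk =>
    isUnit_of_X_pow_dvd_sub_one (by grind) (X_pow_dvd_siegelSeries_sub_one (by grind) (by grind))
  choose! g hg using hunit
  have hfn : f ^ n = map (Int.castRingHom ℚ) (∏ k ∈ Icc 1 m, g k ^ E k : ℤ⟦X⟧ˣ) := by
    refine HahnSeries.ofPowerSeries_injective (Γ := ℤ) ?_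
    rw [map_pow, h, ← RingHom.comp_apply, RingHom.map_val_prod_zpow]
    exact prod_congr rfl fun k hk => by rw [RingHom.comp_apply, hg k hk]; rfl
  obtain ⟨fZ, rfl⟩ := hfbd.exists_map_eq_of_pow_eq_map hn.ne' hfn
  have hfZ : X ^ 1 ∣ fZ - 1 := by
    rw [← coeff_zero_eq_constantCoeff_apply, coeff_map, eq_intCast, Int.cast_eq_one] at hf1
    rw [pow_one, X_dvd_iff, map_sub, map_one, ← coeff_zero_eq_constantCoeff_apply, hf1, sub_self]
  obtain ⟨fU, rfl⟩ := isUnit_of_X_pow_dvd_sub_one one_ne_zero hfZ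
  have hfU : fU ^ n = ∏ k ∈ Icc 1 m, g k ^ E k :=
    Units.ext <| map_injective _ Int.cast_injective <| by
      rw [Units.val_pow_eq_pow_val, ← hfn]
      exact map_pow _ _ _
  intro k hk
  obtain ⟨z, hz⟩ := dvd_mul_coeff_siegelSeries (by omega) hn.ne' (mem_higherUnits.2 hfZ) hg hfU hk
  have hq : (n : ℚ) * (e k * coeff k (siegelSeries N k)) = n * z := by
    rw [← mul_assoc, ← hE k hk]
    exact_mod_cast hz
  have he := mul_left_cancel₀ (by positivity) hq
  rw [coeff_siegelSeries_self (by grind) (by grind)] at he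
  refine ⟨fun hkN => ⟨-z, ?_⟩, fun hkN => ⟨-z, ?_⟩⟩ <;> simp only [hkN, if_true, if_false] at he <;>
    push_cast at he ⊢ <;> linarith

/-- If `f ∈ ℚ[[x]]` has bounded denominator and constant term `1`, and
`f^n = ∏_{k=1}^m g_k^{n·e(k)}` for a positive integer `n` and rationals `e(k)` with
`n·e(k) ∈ ℤ`, then `e(k) ∈ ℤ` whenever `2k ≠ N` and `e(k) ∈ ½ℤ` when `2k = N`. -/
theorem siegelSeries_exponents_integral (N : ℕ) (hN : 2 ≤ N) (m : ℕ) (hm : m = N / 2)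
    (f : PowerSeries ℚ) (hfbd : f.HasBoundedDenominator)
    (hf1 : PowerSeries.constantCoeff (R := ℚ) f = 1)
    (n : ℕ) (hn : 0 < n) (e : ℕ → ℚ) (E : ℕ → ℤ)
    (hE : ∀ k ∈ Icc 1 m, (E k : ℚ) = (n : ℚ) * e k)
    (h : (HahnSeries.ofPowerSeries ℤ ℚ f : LaurentSeries ℚ) ^ n =
      ∏ k ∈ Icc 1 m, siegelSeriesL N k ^ E k) :
    ∀ k ∈ Icc 1 m,
      (2 * k ≠ N → ∃ z : ℤ, e k = (z : ℚ)) ∧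
      (2 * k = N → ∃ z : ℤ, e k = (z : ℚ) / 2) :=
  siegelSeries_exponents_integral_general N m hm f hfbd hf1 n hn e E hE h
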